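/- Let N ≥ 1 and let A ∈ ℝ^{N×N} be a real symmetric matrix such that E − A has eigenvalues 1, 2, …, N (counted with multiplicity). Then for all c > 0 and t > 0, ∫₀ᵗ exp( ln((2t + c²)/(2s + c²)) · A ) ds = (t + c²/2) · (E − A)⁻¹ · ( E − exp( ln(c²/(2t + c²)) · (E − A) ) ), and this symmetric matrix has eigenvalues λ_k = (1/(2k)) · ((2t + c²)^k − c^{2k}) / (2t + c²)^{k−1} for k = 1,…,N; in particular λ_1 = t. -/

import Mathlib

/-!
Diagonalize `E - A = U diag(β) Uᵀ` with `U` orthogonal; the hypothesis on the characteristic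
polynomial says that `β` is a rearrangement of `1, …, N`. Every matrix in the statement is then
`U diag(f ∘ β) Uᵀ` for a scalar function `f`, and the matrix identity reduces to the scalar one
`∫₀ᵗ ((2t + c²)/(2s + c²))^(1-β) ds = (t + c²/2) β⁻¹ (1 - (c²/(2t + c²))^β)`,
valid for every real `β ≠ 0` and proved by the fundamental theorem of calculus.
-/

open Polynomial

namespace Matrix

variable {n : Type*} [Fintype n] [DecidableEq n] (U : unitary (Matrix n n ℝ))

noncomputable def conjDiagonal : (n → ℝ) →ₐ[ℝ] Matrix n n ℝ :=
  (AlgHomClass.toAlgHom (Unitary.conjStarAlgAut ℝ _ U)).comp (diagonalAlgHom ℝ)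

lemma conjDiagonal_apply (d : n → ℝ) :
    conjDiagonal U d = (U : Matrix n n ℝ) * diagonal d * (star U : Matrix n n ℝ) := rfl

lemma exp_conjDiagonal (d : n → ℝ) :
    NormedSpace.exp (conjDiagonal U d) = conjDiagonal U (Real.exp ∘ d) := by
  have h := exp_units_conj (Unitary.toUnits U) (diagonal d)
  simp only [Unitary.val_toUnits_apply, Unitary.val_inv_toUnits_apply, UnitaryGroup.inv_val] at h
  rw [conjDiagonal_apply, conjDiagonal_apply, h, exp_diagonal, Pi.exp_def, Real.exp_eq_exp_ℝ]
  rfl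

lemma inv_conjDiagonal {d : n → ℝ} (hd : ∀ i, d i ≠ 0) :
    (conjDiagonal U d)⁻¹ = conjDiagonal U d⁻¹ := by
  refine inv_eq_right_inv ?_
  rw [← map_mul, ← map_one (conjDiagonal U)]
  congr 1
  ext i
  simp [hd i]

lemma isSymm_conjDiagonal (d : n → ℝ) : (conjDiagonal U d).IsSymm := by
  rw [← isHermitian_iff_isSymm, conjDiagonal_apply, star_eq_conjTranspose]
  exact isHermitian_mul_mul_conjTranspose _ (isHermitian_diagonal d)

lemma charpoly_conjDiagonal (d : n → ℝ) :
    (conjDiagonal U d).charpoly = ∏ i, (X - C (d i)) := by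
  rw [conjDiagonal_apply, charpoly_mul_comm, ← mul_assoc, Unitary.coe_star_mul_self, one_mul,
    charpoly_diagonal]

lemma conjDiagonal_apply_apply (d : n → ℝ) (i j : n) :
    conjDiagonal U d i j
      = ∑ m, (U : Matrix n n ℝ) i m * (star U : Matrix n n ℝ) m j * d m := by
  rw [conjDiagonal_apply, mul_apply]
  simp only [mul_diagonal]
  exact Finset.sum_congr rfl fun m _ => by ring

lemma of_intervalIntegral_conjDiagonal {f : ℝ → n → ℝ} {a b : ℝ}
    (hf : ∀ m, IntervalIntegrable (fun s => f s m) MeasureTheory.volume a b) :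
    of (fun i j => ∫ s in a..b, conjDiagonal U (f s) i j)
      = conjDiagonal U (fun m => ∫ s in a..b, f s m) := by
  ext i j
  simp only [of_apply, conjDiagonal_apply_apply]
  rw [intervalIntegral.integral_finsetSum fun m _ => (hf m).const_mul _]
  simp only [intervalIntegral.integral_const_mul]

end Matrix

section Scalar

variable {b t : ℝ}

lemma two_mul_add_pos_of_mem_uIcc (hb : 0 < b) (htb : 0 < 2 * t + b) {s : ℝ}
    (hs : s ∈ Set.uIcc 0 t) : 0 < 2 * s + b := by
  rcases Set.mem_uIcc.mp hs with h | h <;> linarith [h.1, h.2]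

lemma continuousOn_exp_log_div_mul (hb : 0 < b) (htb : 0 < 2 * t + b) (y : ℝ) :
    ContinuousOn (fun s => Real.exp (Real.log ((2 * t + b) / (2 * s + b)) * y))
      (Set.uIcc 0 t) := by
  have hpos := fun s hs => two_mul_add_pos_of_mem_uIcc hb htb (s := s) hs
  refine Real.continuous_exp.comp_continuousOn (ContinuousOn.mul ?_ continuousOn_const)
  refine ContinuousOn.log (continuousOn_const.div (by fun_prop) fun s hs => (hpos s hs).ne') ?_
  exact fun s hs => (div_pos htb (hpos s hs)).ne'

lemma integral_exp_log_div_mul (hb : 0 < b) (htb : 0 < 2 * t + b) {β : ℝ} (hβ : β ≠ 0) :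
    ∫ s in (0:ℝ)..t, Real.exp (Real.log ((2 * t + b) / (2 * s + b)) * (1 - β))
      = (t + b / 2) * (β⁻¹ * (1 - Real.exp (Real.log (b / (2 * t + b)) * β))) := by
  set a := 2 * t + b
  have hpos := fun s hs => two_mul_add_pos_of_mem_uIcc hb htb (s := s) hs
  have hintegrand : ∀ s ∈ Set.uIcc 0 t,
      Real.exp (Real.log (a / (2 * s + b)) * (1 - β)) = a ^ (1 - β) * (2 * s + b) ^ (β - 1) := by
    intro s hs
    rw [← Real.rpow_def_of_pos (div_pos htb (hpos s hs)), Real.div_rpow htb.le (hpos s hs).le,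
      div_eq_mul_inv, ← Real.rpow_neg (hpos s hs).le, neg_sub]
  have hderiv : ∀ s ∈ Set.uIcc 0 t,
      HasDerivAt (fun s => (2 * s + b) ^ β / (2 * β)) ((2 * s + b) ^ (β - 1)) s := by
    intro s hs
    have hlin : HasDerivAt (fun s => 2 * s + b) 2 s := by
      simpa using ((hasDerivAt_id s).const_mul 2).add_const b
    refine ((hlin.rpow_const (p := β) (Or.inl (hpos s hs).ne')).div_const (2 * β)).congr_deriv ?_
    field_simp
  have hcont : ContinuousOn (fun s => (2 * s + b) ^ (β - 1)) (Set.uIcc 0 t) :=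
    fun s hs => ((by fun_prop : Continuous fun s : ℝ => 2 * s + b).continuousAt.rpow_const
      (Or.inl (hpos s hs).ne')).continuousWithinAt
  rw [intervalIntegral.integral_congr hintegrand, intervalIntegral.integral_const_mul,
    intervalIntegral.integral_eq_sub_of_hasDerivAt hderiv hcont.intervalIntegrable,
    ← Real.rpow_def_of_pos (div_pos hb htb), Real.div_rpow hb.le htb.le,
    Real.rpow_sub htb, Real.rpow_one]
  have haβ : 0 < a ^ β := Real.rpow_pos_of_pos htb β
  simp only [mul_zero, zero_add]
  field_simp
  ring

lemma exp_log_mul_natCast {x : ℝ} (hx : 0 < x) (k : ℕ) : Real.exp (Real.log x * k) = x ^ k := by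
  rw [← Real.rpow_def_of_pos hx, Real.rpow_natCast]

end Scalar

lemma half_add_mul_inv_one_sub_exp_log_div {c t : ℝ} (hc : c ≠ 0) (htc : 0 < 2 * t + c ^ 2)
    (k : ℕ) :
    (t + c ^ 2 / 2) * (((k : ℝ) + 1)⁻¹
        * (1 - Real.exp (Real.log (c ^ 2 / (2 * t + c ^ 2)) * ((k : ℝ) + 1))))
      = 1 / (2 * ((k : ℝ) + 1)) * ((2 * t + c ^ 2) ^ (k + 1) - c ^ (2 * (k + 1)))
          / (2 * t + c ^ 2) ^ k := by
  have hk : (k : ℝ) + 1 = ((k + 1 : ℕ) : ℝ) := by push_cast; ring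
  rw [hk, exp_log_mul_natCast (div_pos (by positivity) htc), div_pow, pow_mul,
    show t + c ^ 2 / 2 = (2 * t + c ^ 2) / 2 by ring]
  generalize 2 * t + c ^ 2 = a at htc ⊢
  rw [pow_succ a k]
  have : a ^ k ≠ 0 := by positivity
  field_simp

section Roots

variable {ι κ : Type*} {s : Finset ι} {s' : Finset κ}

lemma Polynomial.map_val_eq_of_prod_X_sub_C_eq {K : Type*} [Field K] {f : ι → K} {g : κ → K}
    (h : ∏ i ∈ s, (X - C (f i)) = ∏ k ∈ s', (X - C (g k))) : s.val.map f = s'.val.map g := by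
  simpa [roots_prod, Finset.prod_ne_zero_iff, X_sub_C_ne_zero, Multiset.bind_singleton]
    using congrArg roots h

lemma Finset.prod_comp_eq_of_map_val_eq {α M : Type*} [CommMonoid M] {f : ι → α} {g : κ → α}
    (F : α → M) (h : s.val.map f = s'.val.map g) : ∏ i ∈ s, F (f i) = ∏ k ∈ s', F (g k) := by
  simpa only [Finset.prod_eq_multiset_prod, Multiset.map_map, Function.comp_def]
    using congrArg (fun m => (m.map F).prod) h

end Roots

lemma Matrix.IsHermitian.exists_eq_conjDiagonal_of_charpoly_eq {n κ : Type*} [Fintype n]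
    [DecidableEq n] {B : Matrix n n ℝ} (hB : B.IsHermitian) {s : Finset κ} {g : κ → ℝ}
    (h : B.charpoly = ∏ k ∈ s, (X - C (g k))) :
    ∃ (U : unitary (Matrix n n ℝ)) (β : n → ℝ),
      B = conjDiagonal U β ∧ Finset.univ.val.map β = s.val.map g := by
  refine ⟨hB.eigenvectorUnitary, hB.eigenvalues, ?_,
    map_val_eq_of_prod_X_sub_C_eq (hB.charpoly_eq.symm.trans h)⟩
  rw [conjDiagonal_apply]
  simpa [RCLike.ofReal_real_eq_id] using hB.spectral_theorem

theorem statement6 (N : ℕ) (A : Matrix (Fin N) (Fin N) ℝ)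
    (hsymm : A.IsSymm)
    (heig : (1 - A).charpoly
      = ∏ k ∈ Finset.range N, (X - C ((k : ℝ) + 1))) (c t : ℝ) (hc : 0 < c) (ht : 0 < t) :
    (Matrix.of fun i j =>
        ∫ s in (0:ℝ)..t,
          (NormedSpace.exp (Real.log ((2*t + c^2)/(2*s + c^2)) • A)) i j)
      = (t + c^2/2) •
        ((1 - A)⁻¹ *
          (1 - NormedSpace.exp (Real.log (c^2/(2*t + c^2)) • (1 - A)))) ∧
    ((t + c^2/2) •
        ((1 - A)⁻¹ *
          (1 - NormedSpace.exp (Real.log (c^2/(2*t + c^2)) • (1 - A))))).IsSymm ∧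
    ((t + c^2/2) •
        ((1 - A)⁻¹ *
          (1 - NormedSpace.exp (Real.log (c^2/(2*t + c^2)) • (1 - A))))).charpoly
      = ∏ k ∈ Finset.range N,
          (X - C ((1/(2*((k:ℝ)+1))) * ((2*t + c^2)^(k+1) - c^(2*(k+1))) / (2*t + c^2)^k)) ∧
    (1/(2*(1:ℝ))) * ((2*t + c^2)^1 - c^(2*1)) / (2*t + c^2)^(0:ℕ) = t := by
  have hB : (1 - A).IsHermitian :=
    Matrix.isHermitian_one.sub (Matrix.isHermitian_iff_isSymm.mpr hsymm)
  obtain ⟨U, β, hspec, hβ⟩ := hB.exists_eq_conjDiagonal_of_charpoly_eq heig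
  have hA : A = Matrix.conjDiagonal U (1 - β) := by rw [map_sub, map_one, ← hspec, sub_sub_cancel]
  have hβ0 : ∀ i, β i ≠ 0 := by
    intro i
    obtain ⟨k, -, hk⟩ :=
      Multiset.mem_map.mp (hβ ▸ Multiset.mem_map_of_mem β (Finset.mem_univ_val i))
    rw [← hk]
    positivity
  have htc : 0 < 2 * t + c ^ 2 := by positivity
  set ρ := Real.log (c^2/(2*t + c^2))
  set w : ℝ → ℝ := fun x => (t + c^2/2) * (x⁻¹ * (1 - Real.exp (ρ * x)))
  have hRHS : (t + c^2/2) • ((1 - A)⁻¹ * (1 - NormedSpace.exp (ρ • (1 - A))))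
      = Matrix.conjDiagonal U (w ∘ β) := by
    rw [hspec, Matrix.inv_conjDiagonal U hβ0, ← map_smul, Matrix.exp_conjDiagonal,
      ← map_one (Matrix.conjDiagonal U), ← map_sub, ← map_mul, ← map_smul]
    rfl
  have hLHS : (Matrix.of fun i j => ∫ s in (0:ℝ)..t,
      (NormedSpace.exp (Real.log ((2*t + c^2)/(2*s + c^2)) • A)) i j)
        = Matrix.conjDiagonal U (w ∘ β) := by
    simp_rw [hA, ← map_smul, Matrix.exp_conjDiagonal, Function.comp_def, Pi.smul_apply,
      Pi.sub_apply, Pi.one_apply, smul_eq_mul]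
    rw [Matrix.of_intervalIntegral_conjDiagonal U
      fun m => (continuousOn_exp_log_div_mul (by positivity) htc _).intervalIntegrable]
    congr 1
    funext m
    exact integral_exp_log_div_mul (by positivity) htc (hβ0 m)
  refine ⟨hLHS.trans hRHS.symm, hRHS ▸ Matrix.isSymm_conjDiagonal U _, ?_, by ring⟩
  rw [hRHS, Matrix.charpoly_conjDiagonal]
  refine (Finset.prod_comp_eq_of_map_val_eq (fun x => X - C (w x)) hβ).trans ?_
  exact Finset.prod_congr rfl fun k _ =>
    congrArg (fun y => X - C y) (half_add_mul_inv_one_sub_exp_log_div hc.ne' htc k)
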